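/- Let k ≥ 1, let p < q be odd primes, n = 2^k·p·q, M = 2^{k+1} - 1, a = σ(n) - 2n. If n is weird then M < p < 2M. -/

import Mathlib

/-- Sum of the positive divisors of `n`. -/
def sigma' (n : ℕ) : ℕ := ∑ d ∈ n.divisors, d

/-- `n` is abundant if `σ(n) > 2n`. -/
def Abundant (n : ℕ) : Prop := 2 * n < sigma' n

/-- `n` is pseudoperfect (in the weak sense) if some subset of its proper divisors sums to `n`. -/
def Pseudoperfect (n : ℕ) : Prop := ∃ s ⊆ n.properDivisors, ∑ d ∈ s, d = n

/-- `n` is weird if it is abundant and no subset of its proper divisors sums to `n`. -/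
def Weird (n : ℕ) : Prop := Abundant n ∧ ¬ Pseudoperfect n

/-!
Write `M = 2 ^ (k + 1) - 1`; every `m ≤ M` is a sum of distinct divisors `2 ^ j`, `j ≤ k`,
of `n`. If `p ≤ M`, writing `p` in binary gives `n = ∑_{i<k} 2^i p q + ∑_j 2^j q`, a sum of
distinct proper divisors. If the abundance `a = σ(n) - 2n` were at most `M`, removing powers of
two summing to `a` from the proper divisors would leave a subset summing to `n`; so `a > M`.
But `a = M (p + q + 1) - p q ≤ M` as soon as `p ≥ 2M`.
-/

open Finset

lemma sigma'_mul {m n : ℕ} (h : m.Coprime n) : sigma' (m * n) = sigma' m * sigma' n :=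
  h.sum_divisors_mul

lemma sigma'_two_pow (k : ℕ) : sigma' (2 ^ k) = 2 ^ (k + 1) - 1 := by
  rw [sigma', Nat.sum_divisors_prime_pow Nat.prime_two, Nat.geomSum_eq le_rfl, Nat.div_one]

lemma Nat.Prime.sigma'_eq {p : ℕ} (hp : p.Prime) : sigma' p = p + 1 := by
  rw [sigma', hp.divisors, sum_pair hp.one_lt.ne, add_comm]

lemma exists_subset_range_sum_two_pow_eq {K m : ℕ} (hm : m < 2 ^ K) :
    ∃ s ⊆ range K, ∑ i ∈ s, 2 ^ i = m := by
  refine ⟨m.bitIndices.toFinset, fun i hi => ?_, sum_toFinset_bitIndices_two_pow m⟩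
  rw [List.mem_toFinset] at hi
  exact mem_range.2 <| (Nat.pow_lt_pow_iff_right one_lt_two).1 <|
    (Nat.two_pow_le_of_mem_bitIndices hi).trans_lt hm

lemma exists_subset_image_two_pow_mul_sum_eq {K c m : ℕ} (hc : 0 < c) (hm : m < 2 ^ K) :
    ∃ s ⊆ (range K).image (2 ^ · * c), ∑ d ∈ s, d = m * c := by
  obtain ⟨s, hs, hsum⟩ := exists_subset_range_sum_two_pow_eq hm
  have hinj : Function.Injective (2 ^ · * c) := fun i j h =>
    Nat.pow_right_injective le_rfl (Nat.eq_of_mul_eq_mul_right hc h)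
  refine ⟨s.image (2 ^ · * c), image_subset_image hs, ?_⟩
  rw [sum_image fun i _ j _ h => hinj h, ← sum_mul, hsum]

lemma pseudoperfect_of_sum_eq_sigma'_sub {n : ℕ} {t : Finset ℕ} (ht : t ⊆ n.properDivisors)
    (hn : 2 * n ≤ sigma' n) (hsum : ∑ d ∈ t, d = sigma' n - 2 * n) : Pseudoperfect n := by
  refine ⟨n.properDivisors \ t, sdiff_subset, ?_⟩
  have hσ : sigma' n = ∑ d ∈ n.properDivisors, d + n :=
    Nat.sum_divisors_eq_sum_properDivisors_add_self
  have hsplit := sum_sdiff (f := fun d => d) ht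
  omega

lemma Weird.two_pow_succ_le_sigma'_sub {n k : ℕ} (hw : Weird n) (hdvd : 2 ^ k ∣ n)
    (hlt : 2 ^ k < n) :
    2 ^ (k + 1) ≤ sigma' n - 2 * n := by
  by_contra! h
  obtain ⟨s, hs, hsum⟩ := exists_subset_image_two_pow_mul_sum_eq one_pos h
  refine hw.2 (pseudoperfect_of_sum_eq_sigma'_sub (hs.trans ?_) hw.1.le (by rw [hsum, mul_one]))
  simp only [image_subset_iff, mem_range, mul_one, Nat.mem_properDivisors]
  intro i hi
  exact ⟨(pow_dvd_pow 2 (Nat.lt_succ_iff.1 hi)).trans hdvd,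
    (Nat.pow_le_pow_right two_pos (Nat.lt_succ_iff.1 hi)).trans_lt hlt⟩

lemma pseudoperfect_two_pow_mul_mul {k p q : ℕ} (hp : 1 < p) (hodd : Odd p) (hpq : p.Coprime q)
    (hlt : p < 2 ^ (k + 1)) : Pseudoperfect (2 ^ k * p * q) := by
  have hq : 0 < q := Nat.pos_of_ne_zero <| by rintro rfl; simp at hpq; omega
  obtain ⟨s, hs, hs_sum⟩ := exists_subset_image_two_pow_mul_sum_eq (c := p * q) (by positivity)
    (Nat.sub_one_lt (Nat.two_pow_pos k).ne' : 2 ^ k - 1 < 2 ^ k)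
  obtain ⟨t, ht, ht_sum⟩ := exists_subset_image_two_pow_mul_sum_eq hq hlt
  -- `p` divides every element of `s` and no element of `t`
  have hdisj : Disjoint s t := by
    refine disjoint_left.2 fun d hds hdt => ?_
    obtain ⟨i, -, rfl⟩ := mem_image.1 (hs hds)
    obtain ⟨j, -, hj⟩ := mem_image.1 (ht hdt)
    have hdvd : p ∣ 2 ^ j * q := hj ▸ dvd_mul_of_dvd_right (dvd_mul_right p q) _
    exact hp.ne' ((((Nat.coprime_two_right.2 hodd).pow_right j).mul_right hpq).eq_one_of_dvd hdvd)
  refine ⟨s ∪ t, union_subset (hs.trans ?_) (ht.trans ?_), ?_⟩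
  · simp only [image_subset_iff, mem_range, Nat.mem_properDivisors, mul_assoc]
    exact fun i hi => ⟨mul_dvd_mul_right (pow_dvd_pow 2 hi.le) _,
      Nat.mul_lt_mul_of_pos_right (Nat.pow_lt_pow_right one_lt_two hi) (mul_pos (by omega) hq)⟩
  · simp only [image_subset_iff, mem_range, Nat.lt_succ_iff, Nat.mem_properDivisors]
    exact fun j hj => ⟨mul_dvd_mul_right ((pow_dvd_pow 2 hj).mul_right p) q,
      Nat.mul_lt_mul_of_pos_right ((Nat.pow_le_pow_right two_pos hj).trans_lt
        (lt_mul_of_one_lt_right (Nat.two_pow_pos k) hp)) hq⟩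
  · rw [sum_union hdisj, hs_sum, ht_sum, ← add_one_mul, Nat.sub_add_cancel Nat.one_le_two_pow,
      mul_assoc]

lemma mul_add_one_mul_add_one_sub_le {M p q : ℕ} (hp : 2 * M ≤ p) (hpq : p ≤ q) :
    M * ((p + 1) * (q + 1)) - (M + 1) * (p * q) ≤ M := by
  have : M * (p + q) ≤ p * q := by nlinarith
  rw [tsub_le_iff_right]; nlinarith

lemma sigma'_two_pow_mul_mul {k p q : ℕ} (hp : p.Prime) (hq : q.Prime) (hop : Odd p)
    (hoq : Odd q) (hpq : p.Coprime q) :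
    sigma' (2 ^ k * p * q) = (2 ^ (k + 1) - 1) * ((p + 1) * (q + 1)) := by
  rw [mul_assoc, sigma'_mul ((Nat.coprime_two_left.2 (hop.mul hoq)).pow_left k), sigma'_mul hpq,
    sigma'_two_pow, hp.sigma'_eq, hq.sigma'_eq]

theorem weird_p_bounds_general (k p q : ℕ) (hp : p.Prime) (hq : q.Prime)
    (hop : Odd p) (hoq : Odd q) (hpq : p < q) (hw : Weird (2 ^ k * p * q)) :
    2 ^ (k + 1) - 1 < p ∧ p < 2 * (2 ^ (k + 1) - 1) := by
  have hpq' : p.Coprime q := (Nat.coprime_primes hp hq).2 hpq.ne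
  have hM : 1 ≤ 2 ^ (k + 1) := Nat.one_le_two_pow
  constructor
  · by_contra! hle
    exact hw.2 (pseudoperfect_two_pow_mul_mul hp.one_lt hop hpq' (by omega))
  · by_contra! hge
    have hlow := hw.two_pow_succ_le_sigma'_sub (Dvd.intro _ (mul_assoc _ p q).symm) <|
      (lt_mul_of_one_lt_right (Nat.two_pow_pos k) hp.one_lt).trans_le
        (Nat.le_mul_of_pos_right _ hq.pos)
    have h2n : 2 * (2 ^ k * p * q) = (2 ^ (k + 1) - 1 + 1) * (p * q) := by
      rw [Nat.sub_add_cancel hM]; ring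
    rw [sigma'_two_pow_mul_mul hp hq hop hoq hpq', h2n] at hlow
    have hup := mul_add_one_mul_add_one_sub_le hge hpq.le
    omega

theorem weird_p_bounds (k p q : ℕ) (hk : 1 ≤ k) (hp : p.Prime) (hq : q.Prime)
    (hop : Odd p) (hoq : Odd q) (hpq : p < q) (hw : Weird (2 ^ k * p * q)) :
    2 ^ (k + 1) - 1 < p ∧ p < 2 * (2 ^ (k + 1) - 1) :=
  weird_p_bounds_general k p q hp hq hop hoq hpq hw
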